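/- arXiv:1909.06198 — 4 statements merged into one kernel-verified Lean document; each statement's English description precedes it below -/
import Mathlib

section
/- Let F be a field, p a monic irreducible polynomial of degree s over F with companion matrix C, let α_1 ≥ α_2 ≥ … ≥ α_m ≥ 1 be integers, and let G = diag(G_1,…,G_m) where G_i is the generalized Jordan block of size α_i associated with p. Let τ_j = #{i : α_i ≥ j} for j = 1,…,α_1 be the conjugate partition of (α_1,…,α_m). Then G is similar over F to the matrix W that is block upper bidiagonal with α_1 block rows and columns, where the j-th diagonal block W_j (of size sτ_j) is block diagonal with τ_j copies of C, the block in position (j, j+1) (of size sτ_j × sτ_{j+1}) has its (k,k) s×s sub-block equal to E for 1 ≤ k ≤ τ_{j+1} and all other s×s sub-blocks zero, and all remaining blocks of W are zero; that is, there exists an invertible matrix P over F with P^{-1}GP = W. -/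
open Matrix Polynomial

/-- The companion matrix of a monic polynomial `p` of degree `s`:
ones on the first subdiagonal, `-(coefficients of p)` in the last column. -/
def companionMat (F : Type*) [Field F] (s : ℕ) (p : Polynomial F) :
    Matrix (Fin s) (Fin s) F :=
  Matrix.of fun i j =>
    if (j : ℕ) = s - 1 then -p.coeff (i : ℕ)
    else if (i : ℕ) = (j : ℕ) + 1 then 1 else 0

/-- The matrix `E` whose `(1,s)` entry is `1` and all other entries are `0`. -/
def Emat (F : Type*) [Field F] (s : ℕ) : Matrix (Fin s) (Fin s) F :=
  Matrix.of fun i j => if (i : ℕ) = 0 ∧ (j : ℕ) = s - 1 then 1 else 0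

/-- The generalized Jordan form `diag(G_1, …, G_m)` associated with `p` (degree `s`),
where `G_i` is the generalized Jordan block of size `α i`: diagonal `s×s` blocks equal
to the companion matrix `C` of `p`, blocks `E` directly below the diagonal, zeros
elsewhere. Rows/columns are indexed by `Σ i : Fin m, Fin (α i) × Fin s`:
block `i`, sub-block `a`, inner index `u`. -/
def genJordanForm (F : Type*) [Field F] (s m : ℕ) (α : Fin m → ℕ) (p : Polynomial F) :
    Matrix (Σ i : Fin m, Fin (α i) × Fin s) (Σ i : Fin m, Fin (α i) × Fin s) F :=
  Matrix.of fun x y =>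
    if x.1 = y.1 then
      (if (x.2.1 : ℕ) = (y.2.1 : ℕ) then companionMat F s p x.2.2 y.2.2
       else if (x.2.1 : ℕ) = (y.2.1 : ℕ) + 1 then Emat F s x.2.2 y.2.2 else 0)
    else 0

/-- The generalized Weyr form associated with `p` (degree `s`) and the conjugate
partition `τ : Fin a₁ → ℕ`: block upper bidiagonal with `a₁` block rows, the `j`-th
diagonal block being block diagonal with `τ j` copies of the companion matrix `C`,
and the `(j, j+1)` block having `E` in its `(k,k)` `s×s` sub-blocks and zeros
elsewhere. Rows/columns indexed by `Σ j : Fin a₁, Fin (τ j) × Fin s`. -/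
def weyrForm (F : Type*) [Field F] (s a₁ : ℕ) (τ : Fin a₁ → ℕ) (p : Polynomial F) :
    Matrix (Σ j : Fin a₁, Fin (τ j) × Fin s) (Σ j : Fin a₁, Fin (τ j) × Fin s) F :=
  Matrix.of fun x y =>
    if x.1 = y.1 ∧ (x.2.1 : ℕ) = (y.2.1 : ℕ) then companionMat F s p x.2.2 y.2.2
    else if (y.1 : ℕ) = (x.1 : ℕ) + 1 ∧ (x.2.1 : ℕ) = (y.2.1 : ℕ) then
      Emat F s x.2.2 y.2.2
    else 0


private lemma tau_lt_iff {m : ℕ} (α : Fin m → ℕ) (hα : Antitone α) (j : ℕ) (k : Fin m) :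
    (k : ℕ) < (Finset.univ.filter fun i : Fin m => j + 1 ≤ α i).card ↔ j + 1 ≤ α k := by
  constructor
  · intro h
    by_contra hc
    have hsub : (Finset.univ.filter fun i : Fin m => j + 1 ≤ α i) ⊆ Finset.Iio k := by
      intro i hi
      simp only [Finset.mem_filter, Finset.mem_univ, true_and] at hi
      simp only [Finset.mem_Iio]
      by_contra hik
      exact hc (le_trans hi (hα (not_lt.mp hik)))
    have hcard := Finset.card_le_card hsub
    rw [Fin.card_Iio] at hcard
    omega
  · intro h
    have hsub : Finset.Iic k ⊆ (Finset.univ.filter fun i : Fin m => j + 1 ≤ α i) := by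
      intro i hi
      simp only [Finset.mem_Iic] at hi
      simp only [Finset.mem_filter, Finset.mem_univ, true_and]
      exact le_trans h (hα hi)
    have hcard := Finset.card_le_card hsub
    rw [Fin.card_Iic] at hcard
    omega

private lemma tau_le_m {m : ℕ} (α : Fin m → ℕ) (j : ℕ) :
    (Finset.univ.filter fun i : Fin m => j + 1 ≤ α i).card ≤ m := by
  calc (Finset.univ.filter fun i : Fin m => j + 1 ≤ α i).card
      ≤ (Finset.univ : Finset (Fin m)).card := Finset.card_filter_le _ _
    _ = m := by simp

private lemma sigma_ext' {a₁ s : ℕ} {τ : Fin a₁ → ℕ} {x y : Σ j : Fin a₁, Fin (τ j) × Fin s}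
    (h1 : (x.1 : ℕ) = y.1) (h2 : (x.2.1 : ℕ) = y.2.1) (h3 : x.2.2 = y.2.2) : x = y := by
  obtain ⟨j, k, u⟩ := x
  obtain ⟨j', k', u'⟩ := y
  dsimp at h1 h2 h3
  have hj : j = j' := Fin.ext h1
  subst hj
  have hk : k = k' := Fin.ext h2
  subst hk
  subst h3
  rfl

private def wjEquiv {m : ℕ} (hm : 0 < m) (α : Fin m → ℕ) (hα : Antitone α)
    (hα1 : ∀ i, 1 ≤ α i)
    (τ : Fin (α ⟨0, hm⟩) → ℕ)
    (hτ : ∀ j, τ j = (Finset.univ.filter fun i : Fin m => (j : ℕ) + 1 ≤ α i).card)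
    (s : ℕ) :
    (Σ j : Fin (α ⟨0, hm⟩), Fin (τ j) × Fin s) ≃ (Σ i : Fin m, Fin (α i) × Fin s) where
  toFun x :=
    have hkc : (x.2.1 : ℕ) < (Finset.univ.filter fun i : Fin m => (x.1 : ℕ) + 1 ≤ α i).card := by
      rw [← hτ x.1]; exact x.2.1.2
    have hkm : (x.2.1 : ℕ) < m := hkc.trans_le (tau_le_m α x.1)
    have hαk : (x.1 : ℕ) + 1 ≤ α ⟨x.2.1, hkm⟩ := (tau_lt_iff α hα x.1 ⟨x.2.1, hkm⟩).mp hkc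
    ⟨⟨x.2.1, hkm⟩, ⟨α ⟨x.2.1, hkm⟩ - 1 - x.1, by omega⟩, x.2.2⟩
  invFun y :=
    have hle : α y.1 ≤ α ⟨0, hm⟩ := hα (by simp [Fin.le_def])
    have h1 : 1 ≤ α y.1 := hα1 y.1
    have ha : (y.2.1 : ℕ) < α y.1 := y.2.1.2
    have hkτ : (y.1 : ℕ) < τ ⟨α y.1 - 1 - y.2.1, by omega⟩ := by
      rw [hτ]
      exact (tau_lt_iff α hα _ y.1).mpr (by simp only [Fin.eta]; omega)
    ⟨⟨α y.1 - 1 - y.2.1, by omega⟩, ⟨(y.1 : ℕ), hkτ⟩, y.2.2⟩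
  left_inv := by
    rintro ⟨j, k, u⟩
    have hkc : (k : ℕ) < (Finset.univ.filter fun i : Fin m => (j : ℕ) + 1 ≤ α i).card := by
      rw [← hτ j]; exact k.2
    have hkm : (k : ℕ) < m := hkc.trans_le (tau_le_m α j)
    have hαk : (j : ℕ) + 1 ≤ α ⟨k, hkm⟩ := (tau_lt_iff α hα j ⟨k, hkm⟩).mp hkc
    apply sigma_ext' <;> simp
    omega
  right_inv := by
    rintro ⟨i, a, u⟩
    have ha : (a : ℕ) < α i := a.2
    apply sigma_ext' <;> simp
    omega
/-- the generalized Jordan form with Segre characteristic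
`α_1 ≥ … ≥ α_m ≥ 1` is similar over `F` to the generalized Weyr form associated with
the conjugate partition `τ_j = #{i : α_i ≥ j}`. -/
theorem genJordan_similar_weyr
    {F : Type*} [Field F] {s m : ℕ} (hm : 0 < m)
    (α : Fin m → ℕ) (hα : Antitone α) (hα1 : ∀ i, 1 ≤ α i)
    (p : Polynomial F) (hmonic : p.Monic) (hirr : Irreducible p)
    (hdeg : p.natDegree = s)
    (τ : Fin (α ⟨0, hm⟩) → ℕ)
    (hτ : ∀ j, τ j = (Finset.univ.filter fun i : Fin m => (j : ℕ) + 1 ≤ α i).card) :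
    ∃ (P : Matrix (Σ i : Fin m, Fin (α i) × Fin s)
            (Σ j : Fin (α ⟨0, hm⟩), Fin (τ j) × Fin s) F)
      (Q : Matrix (Σ j : Fin (α ⟨0, hm⟩), Fin (τ j) × Fin s)
            (Σ i : Fin m, Fin (α i) × Fin s) F),
      P * Q = 1 ∧ Q * P = 1 ∧
        Q * genJordanForm F s m α p * P = weyrForm F s (α ⟨0, hm⟩) τ p := by

  classical
  set G := genJordanForm F s m α p with hG
  set e := wjEquiv hm α hα hα1 τ hτ s with he
  refine ⟨(1 : Matrix _ _ F).submatrix ⇑(Equiv.refl _) ⇑e,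
          (1 : Matrix _ _ F).submatrix ⇑e ⇑(Equiv.refl _), ?_, ?_, ?_⟩
  · rw [Matrix.submatrix_mul_equiv _ _ _ e _, one_mul, Matrix.submatrix_one_equiv]
  · rw [Matrix.submatrix_mul_equiv _ _ _ (Equiv.refl _) _, one_mul,
      Matrix.submatrix_one_equiv]
  · rw [Matrix.one_submatrix_mul, Matrix.mul_submatrix_one, Matrix.submatrix_submatrix]
    ext x y
    obtain ⟨j, k, u⟩ := x
    obtain ⟨j', l, v⟩ := y
    have hkc : (k : ℕ) < (Finset.univ.filter fun i : Fin m => (j : ℕ) + 1 ≤ α i).card := by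
      rw [← hτ j]; exact k.2
    have hkm : (k : ℕ) < m := hkc.trans_le (tau_le_m α j)
    have hj : (j : ℕ) + 1 ≤ α ⟨k, hkm⟩ := (tau_lt_iff α hα j ⟨k, hkm⟩).mp hkc
    have hlc : (l : ℕ) < (Finset.univ.filter fun i : Fin m => (j' : ℕ) + 1 ≤ α i).card := by
      rw [← hτ j']; exact l.2
    have hlm : (l : ℕ) < m := hlc.trans_le (tau_le_m α j')
    have hj' : (j' : ℕ) + 1 ≤ α ⟨l, hlm⟩ := (tau_lt_iff α hα j' ⟨l, hlm⟩).mp hlc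
    show G (e ⟨j, k, u⟩) (e ⟨j', l, v⟩) = weyrForm F s (α ⟨0, hm⟩) τ p ⟨j, k, u⟩ ⟨j', l, v⟩
    have hes1 : e ⟨j, k, u⟩ = ⟨⟨k, hkm⟩, ⟨α ⟨k, hkm⟩ - 1 - j, by omega⟩, u⟩ := rfl
    have hes2 : e ⟨j', l, v⟩ = ⟨⟨l, hlm⟩, ⟨α ⟨l, hlm⟩ - 1 - j', by omega⟩, v⟩ := rfl
    rw [hes1, hes2, hG]
    simp only [genJordanForm, weyrForm, Matrix.of_apply]
    by_cases hkl : (k : ℕ) = (l : ℕ)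
    · have hfe : (⟨(k : ℕ), hkm⟩ : Fin m) = ⟨(l : ℕ), hlm⟩ := Fin.ext hkl
      have hαe : α ⟨(k : ℕ), hkm⟩ = α ⟨(l : ℕ), hlm⟩ := congrArg α hfe
      rw [if_pos hfe]
      split_ifs with h1 h2 h3 h4 h5 <;>
        first
          | rfl
          | (exfalso; simp only [Fin.ext_iff, Fin.mk.injEq, not_and] at *; omega)
    · rw [if_neg (show ¬(⟨(k : ℕ), hkm⟩ : Fin m) = ⟨(l : ℕ), hlm⟩ from
          fun h => hkl (congrArg Fin.val h)),
        if_neg (show ¬(j = j' ∧ (k : ℕ) = (l : ℕ)) from fun h => hkl h.2),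
        if_neg (show ¬((j' : ℕ) = (j : ℕ) + 1 ∧ (k : ℕ) = (l : ℕ)) from fun h => hkl h.2)]
end

section
/- Let F be a field, p a monic irreducible polynomial of degree s over F with companion matrix C, and G the generalized Jordan block of size ℓ associated with p (so G ∈ M_{sℓ}(F)). An sℓ × sℓ matrix X over F commutes with G if and only if there exist s×s matrices X_1, X_2, …, X_ℓ over F such that X_1 commutes with C, for each i = 2,…,ℓ the matrix X_i - X̃_{i-1} commutes with C (where X̃_{i-1} is the strictly upper triangular s×s matrix whose (u,v) entry equals the (s, v-u) entry of X_{i-1} for u < v and 0 otherwise), and X is the block lower triangular block-Toeplitz matrix whose (i,j) s×s block equals X_{i-j+1} when i ≥ j and 0 when i < j. -/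
open Matrix Polynomial

/-- The generalized Jordan block of size `ℓ` associated with `p` (degree `s`):
the `sℓ × sℓ` block matrix with `ℓ` diagonal `s×s` blocks equal to the companion
matrix `C` of `p`, blocks `E` directly below the diagonal, zeros elsewhere.
Rows/columns are indexed by `Fin ℓ × Fin s` (block index, index within block). -/
def genJordanBlock (F : Type*) [Field F] (s ℓ : ℕ) (p : Polynomial F) :
    Matrix (Fin ℓ × Fin s) (Fin ℓ × Fin s) F :=
  Matrix.of fun x y =>
    if x.1 = y.1 then companionMat F s p x.2 y.2
    else if (x.1 : ℕ) = (y.1 : ℕ) + 1 then Emat F s x.2 y.2 else 0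

/-- For `X ∈ M_s(F)`, the strictly upper triangular matrix `X̃` whose `(i,j)` entry
(1-indexed) is `x_{s, j-i}` for `i < j` and `0` otherwise. -/
def tildeMat {F : Type*} [Field F] {s : ℕ} (X : Matrix (Fin s) (Fin s) F) :
    Matrix (Fin s) (Fin s) F :=
  Matrix.of fun i j =>
    if h : (i : ℕ) < (j : ℕ) then
      X ⟨s - 1, by have := j.isLt; omega⟩
        ⟨(j : ℕ) - (i : ℕ) - 1, by have := j.isLt; omega⟩
    else 0

section Aux
variable {F : Type*} [Field F] {s : ℕ} (p : Polynomial F)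

lemma sum_ite_val {m : ℕ} (f : Fin m → F) (n : ℕ) :
    (∑ k : Fin m, if (k : ℕ) = n then f k else 0) = if h : n < m then f ⟨n, h⟩ else 0 := by
  split_ifs with h
  · rw [Finset.sum_eq_single (⟨n, h⟩ : Fin m)]
    · simp
    · intro k _ hk; rw [if_neg (fun hkn => hk (Fin.ext hkn))]
    · simp
  · apply Finset.sum_eq_zero; intro k _
    rw [if_neg]; intro hk; exact h (hk ▸ k.isLt)

lemma ite_add_zero' {c : Prop} [Decidable c] (a b : F) :
    (if c then a + b else 0) = (if c then a else 0) + (if c then b else 0) := by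
  split_ifs <;> simp

lemma sum_mul_companion_col (f : Fin s → F) (j : Fin s) (hj : (j : ℕ) ≠ s - 1) :
    (∑ k, f k * companionMat F s p k j) = f ⟨(j : ℕ) + 1, by have := j.isLt; omega⟩ := by
  have step : ∀ k : Fin s, f k * companionMat F s p k j
      = if (k : ℕ) = (j : ℕ) + 1 then f k else 0 := by
    intro k
    simp only [companionMat, Matrix.of_apply, if_neg hj]
    split_ifs <;> simp
  rw [Finset.sum_congr rfl fun k _ => step k, sum_ite_val,
    dif_pos (show (j : ℕ) + 1 < s by have := j.isLt; omega)]

lemma sum_mul_companion_lastcol (f : Fin s → F) (j : Fin s) (hj : (j : ℕ) = s - 1) :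
    (∑ k, f k * companionMat F s p k j) = -∑ k : Fin s, f k * p.coeff k := by
  rw [← Finset.sum_neg_distrib]
  apply Finset.sum_congr rfl
  intro k _
  simp [companionMat, hj, mul_neg]

lemma companion_row_mul (hs : 0 < s) (f : Fin s → F) (i : Fin s) :
    (∑ k, companionMat F s p i k * f k)
      = -p.coeff (i : ℕ) * f ⟨s - 1, by omega⟩ +
        (if h : 1 ≤ (i : ℕ) then f ⟨(i : ℕ) - 1, by have := i.isLt; omega⟩ else 0) := by
  have step : ∀ k : Fin s, companionMat F s p i k * f k
      = (if (k : ℕ) = s - 1 then -p.coeff (i : ℕ) * f k else 0)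
        + (if (k : ℕ) = (i : ℕ) - 1 ∧ 1 ≤ (i : ℕ) then f k else 0) := by
    intro k
    simp only [companionMat, Matrix.of_apply]
    rcases eq_or_ne (k : ℕ) (s - 1) with hk | hk
    · rw [if_pos hk, if_pos hk, if_neg, add_zero]
      rintro ⟨h1, h2⟩
      have := i.isLt; omega
    · rw [if_neg hk, if_neg hk]
      by_cases hik : (i : ℕ) = (k : ℕ) + 1
      · rw [if_pos hik, if_pos ⟨by omega, by omega⟩, one_mul, zero_add]
      · rw [if_neg hik, if_neg, zero_mul, zero_add]
        rintro ⟨h1, h2⟩; omega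
  rw [Finset.sum_congr rfl fun k _ => step k, Finset.sum_add_distrib]
  congr 1
  · rw [sum_ite_val (fun k => -p.coeff (i : ℕ) * f k), dif_pos (by omega)]
  · by_cases h1 : 1 ≤ (i : ℕ)
    · have conv1 : ∀ k : Fin s, (if (k : ℕ) = (i : ℕ) - 1 ∧ 1 ≤ (i : ℕ) then f k else 0)
          = (if (k : ℕ) = (i : ℕ) - 1 then f k else 0) := by
        intro k; simp [h1]
      rw [Finset.sum_congr rfl fun k _ => conv1 k, sum_ite_val,
        dif_pos (show (i : ℕ) - 1 < s by have := i.isLt; omega), dif_pos h1]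
    · rw [dif_neg h1]
      apply Finset.sum_eq_zero; intro k _
      rw [if_neg]; rintro ⟨_, h⟩; exact h1 h

lemma sum_mul_E (hs : 0 < s) (f : Fin s → F) (j : Fin s) :
    (∑ k, f k * Emat F s k j) = if (j : ℕ) = s - 1 then f ⟨0, hs⟩ else 0 := by
  have step : ∀ k : Fin s, f k * Emat F s k j
      = if (j : ℕ) = s - 1 then (if (k : ℕ) = 0 then f k else 0) else 0 := by
    intro k
    simp only [Emat, Matrix.of_apply]
    split_ifs with h1 h2 h3 h3 <;> simp_all <;> try tauto
  rw [Finset.sum_congr rfl fun k _ => step k]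
  split_ifs with h
  · rw [sum_ite_val, dif_pos hs]
  · simp

lemma E_row_mul (hs : 0 < s) (f : Fin s → F) (i : Fin s) :
    (∑ k, Emat F s i k * f k) = if (i : ℕ) = 0 then f ⟨s - 1, by omega⟩ else 0 := by
  have step : ∀ k : Fin s, Emat F s i k * f k
      = if (i : ℕ) = 0 then (if (k : ℕ) = s - 1 then f k else 0) else 0 := by
    intro k
    simp only [Emat, Matrix.of_apply]
    split_ifs with h1 h2 h3 h3 <;> simp_all <;> try tauto
  rw [Finset.sum_congr rfl fun k _ => step k]
  split_ifs with h
  · rw [sum_ite_val, dif_pos (show s - 1 < s by omega)]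
  · simp

lemma companion_pow_col (hs : 0 < s) :
    ∀ m, m < s → ∀ a : Fin s,
      ((companionMat F s p) ^ m) a ⟨0, hs⟩ = if (a : ℕ) = m then 1 else 0 := by
  intro m
  induction m with
  | zero =>
    intro _ a
    rw [pow_zero]
    simp [Matrix.one_apply, Fin.ext_iff, eq_comm]
  | succ n ih =>
    intro hn a
    rw [pow_succ', Matrix.mul_apply]
    have step : ∀ k : Fin s, companionMat F s p a k * ((companionMat F s p) ^ n) k ⟨0, hs⟩
        = if (k : ℕ) = n then companionMat F s p a k else 0 := by
      intro k
      rw [ih (by omega) k]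
      split_ifs <;> simp
    rw [Finset.sum_congr rfl fun k _ => step k, sum_ite_val (fun k => companionMat F s p a k),
      dif_pos (show n < s by omega)]
    simp only [companionMat, Matrix.of_apply]
    rw [if_neg (show ¬ ((⟨n, by omega⟩ : Fin s) : ℕ) = s - 1 by simp; omega)]

lemma entry_rel (Z : Matrix (Fin s) (Fin s) F)
    (hZ : Z * companionMat F s p = companionMat F s p * Z)
    (i j : ℕ) (hi : i + 1 < s) (hj : j + 1 < s) :
    Z ⟨i, by omega⟩ ⟨j, by omega⟩
      = Z ⟨i + 1, hi⟩ ⟨j + 1, hj⟩ + p.coeff (i + 1) * Z ⟨s - 1, by omega⟩ ⟨j, by omega⟩ := by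
  have h := congrFun (congrFun hZ ⟨i + 1, hi⟩) ⟨j, by omega⟩
  rw [Matrix.mul_apply, Matrix.mul_apply,
    sum_mul_companion_col p (fun k => Z ⟨i + 1, hi⟩ k) ⟨j, by omega⟩ (by simp; omega),
    companion_row_mul p (by omega) (fun k => Z k ⟨j, by omega⟩) ⟨i + 1, hi⟩,
    dif_pos (by simp)] at h
  simp only [Fin.val_mk] at h
  have e1 : (⟨i + 1 - 1, by omega⟩ : Fin s) = ⟨i, by omega⟩ := by
    apply Fin.ext; simp
  have e2 : (⟨j + 1, by omega⟩ : Fin s) = ⟨j + 1, hj⟩ := rfl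
  rw [e1, e2] at h
  linear_combination -h

lemma comm_col_rel (Z : Matrix (Fin s) (Fin s) F)
    (hZ : Z * companionMat F s p = companionMat F s p * Z) :
    ∀ d i j (_hd : i + d + 1 = s) (_hj : j ≤ i),
    Z ⟨i, by omega⟩ ⟨j, by omega⟩
      = Z ⟨s - 1, by omega⟩ ⟨s - 1 - i + j, by omega⟩
        + ∑ k : Fin s, (if i < (k : ℕ) then
            p.coeff (k : ℕ) * Z ⟨s - 1, by omega⟩ ⟨(k : ℕ) - i - 1 + j, by have := k.isLt; omega⟩
          else 0) := by
  intro d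
  induction d with
  | zero =>
    intro i j hd hj
    have hi : i = s - 1 := by omega
    subst hi
    rw [Finset.sum_eq_zero (fun k _ => if_neg (by have := k.isLt; omega))]
    have e : (⟨s - 1 - (s - 1) + j, by omega⟩ : Fin s) = ⟨j, by omega⟩ := by
      apply Fin.ext; simp only [Fin.val_mk]; omega
    rw [e]
    exact (add_zero _).symm
  | succ d ih =>
    intro i j hd hj
    have hi1 : i + 1 < s := by omega
    have hj1 : j + 1 < s := by omega
    rw [entry_rel p Z hZ i j hi1 hj1, ih (i + 1) (j + 1) (by omega) (by omega)]
    have hsplit : (∑ k : Fin s, (if i < (k : ℕ) then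
            p.coeff (k : ℕ) * Z ⟨s - 1, by omega⟩ ⟨(k : ℕ) - i - 1 + j, by have := k.isLt; omega⟩
          else 0))
        = (∑ k : Fin s, ((if (k : ℕ) = i + 1 then
              p.coeff (i + 1) * Z ⟨s - 1, by omega⟩ ⟨j, by omega⟩ else 0)
            + (if i + 1 < (k : ℕ) then
              p.coeff (k : ℕ) * Z ⟨s - 1, by omega⟩
                ⟨(k : ℕ) - (i + 1) - 1 + (j + 1), by have := k.isLt; omega⟩ else 0))) := by
      apply Finset.sum_congr rfl
      intro k _
      rcases lt_trichotomy (k : ℕ) (i + 1) with hk | hk | hk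
      · rw [if_neg (by omega), if_neg (by omega), if_neg (by omega), add_zero]
      · rw [if_pos (by omega), if_pos hk, if_neg (by omega), add_zero]
        have : (⟨(k : ℕ) - i - 1 + j, by have := k.isLt; omega⟩ : Fin s) = ⟨j, by omega⟩ := by
          apply Fin.ext; simp; omega
        rw [this, hk]
      · rw [if_pos (by omega), if_neg (by omega), if_pos hk, zero_add]
        have : (⟨(k : ℕ) - i - 1 + j, by have := k.isLt; omega⟩ : Fin s)
            = ⟨(k : ℕ) - (i + 1) - 1 + (j + 1), by have := k.isLt; omega⟩ := by
          apply Fin.ext; simp; omega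
        rw [this]
    rw [hsplit, Finset.sum_add_distrib,
      sum_ite_val (fun _ => p.coeff (i + 1) * Z ⟨s - 1, by omega⟩ ⟨j, by omega⟩),
      dif_pos (show i + 1 < s by omega)]
    have e3 : (⟨s - 1 - (i + 1) + (j + 1), by omega⟩ : Fin s) = ⟨s - 1 - i + j, by omega⟩ := by
      apply Fin.ext; simp; omega
    rw [e3]
    ring

def goodRel {s : ℕ} {F : Type*} [Field F] (hs : 0 < s) (p : Polynomial F)
    (M : Matrix (Fin s) (Fin s) F) : Prop :=
  ∀ i : Fin s, M i ⟨0, hs⟩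
    = M ⟨s - 1, by omega⟩ ⟨s - 1 - (i : ℕ), by omega⟩
      + ∑ k : Fin s, (if (i : ℕ) < (k : ℕ) then
          p.coeff (k : ℕ) * M ⟨s - 1, by omega⟩
            ⟨(k : ℕ) - (i : ℕ) - 1, by have := k.isLt; omega⟩
        else 0)

lemma goodRel_of_comm (hs : 0 < s) (Z : Matrix (Fin s) (Fin s) F)
    (hZ : Z * companionMat F s p = companionMat F s p * Z) : goodRel hs p Z := by
  intro i
  have h := comm_col_rel p Z hZ (s - 1 - (i : ℕ)) (i : ℕ) 0 (by have := i.isLt; omega)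
    (by omega)
  have e1 : (⟨(i : ℕ), by omega⟩ : Fin s) = i := Fin.ext rfl
  have e2 : (⟨s - 1 - (i : ℕ) + 0, by omega⟩ : Fin s) = ⟨s - 1 - (i : ℕ), by omega⟩ := by
    apply Fin.ext; simp
  rw [e1, e2] at h
  rw [h]
  simp only [Nat.add_zero]

lemma goodRel_tilde (hs : 0 < s) (N : Matrix (Fin s) (Fin s) F) :
    goodRel hs p (tildeMat N) := by
  intro i
  have h1 : tildeMat N i ⟨0, hs⟩ = 0 := by
    simp only [tildeMat, Matrix.of_apply]
    rw [dif_neg (by simp)]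
  have h2 : tildeMat N ⟨s - 1, by omega⟩ ⟨s - 1 - (i : ℕ), by omega⟩ = 0 := by
    simp only [tildeMat, Matrix.of_apply]
    rw [dif_neg (by (try simp only [Fin.val_mk]); omega)]
  rw [h1, h2, Finset.sum_eq_zero, add_zero]
  intro k _
  by_cases hk : (i : ℕ) < (k : ℕ)
  · rw [if_pos hk]
    have h3 : tildeMat N ⟨s - 1, by omega⟩
        ⟨(k : ℕ) - (i : ℕ) - 1, by have := k.isLt; omega⟩ = 0 := by
      simp only [tildeMat, Matrix.of_apply]
      rw [dif_neg (by (try simp only [Fin.val_mk]); have := k.isLt; omega)]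
    rw [h3, mul_zero]
  · rw [if_neg hk]

lemma goodRel_add (hs : 0 < s) {A B : Matrix (Fin s) (Fin s) F}
    (hA : goodRel hs p A) (hB : goodRel hs p B) : goodRel hs p (A + B) := by
  intro i
  simp only [Matrix.add_apply, mul_add, ite_add_zero', Finset.sum_add_distrib]
  rw [hA i, hB i]
  ring

lemma tilde_comm (hs : 0 < s) (M : Matrix (Fin s) (Fin s) F) (hM : goodRel hs p M) :
    tildeMat M * companionMat F s p - companionMat F s p * tildeMat M
      = Emat F s * M - M * Emat F s := by
  ext i j
  rw [Matrix.sub_apply, Matrix.sub_apply, Matrix.mul_apply, Matrix.mul_apply,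
    Matrix.mul_apply, Matrix.mul_apply]
  rw [E_row_mul hs (fun k => M k j) i, sum_mul_E hs (fun k => M i k) j,
    companion_row_mul p hs (fun k => tildeMat M k j) i]
  have tlast : tildeMat M ⟨s - 1, by omega⟩ j = 0 := by
    simp only [tildeMat, Matrix.of_apply, Fin.val_mk]
    rw [dif_neg (by have := j.isLt; omega)]
  rw [tlast, mul_zero, zero_add]
  by_cases hj : (j : ℕ) = s - 1
  · rw [sum_mul_companion_lastcol p (fun k => tildeMat M i k) j hj, if_pos hj, hM i]
    have hsum : (∑ k : Fin s, tildeMat M i k * p.coeff (k : ℕ))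
        = ∑ k : Fin s, (if (i : ℕ) < (k : ℕ) then
            p.coeff (k : ℕ) * M ⟨s - 1, by omega⟩
              ⟨(k : ℕ) - (i : ℕ) - 1, by have := k.isLt; omega⟩
          else 0) := by
      apply Finset.sum_congr rfl
      intro k _
      simp only [tildeMat, Matrix.of_apply, Fin.val_mk]
      by_cases hk : (i : ℕ) < (k : ℕ)
      · rw [dif_pos hk, if_pos hk]
        exact mul_comm _ _
      · rw [dif_neg hk, if_neg hk, zero_mul]
    rw [hsum]
    by_cases hi0 : (i : ℕ) = 0
    · rw [dif_neg (by omega), if_pos hi0]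
      have e : (⟨s - 1 - (i : ℕ), by omega⟩ : Fin s) = j :=
        Fin.ext (by simp only [Fin.val_mk]; omega)
      rw [e]
      ring
    · rw [dif_pos (show 1 ≤ (i : ℕ) by omega), if_neg hi0]
      have t2 : tildeMat M ⟨(i : ℕ) - 1, by have := i.isLt; omega⟩ j
          = M ⟨s - 1, by omega⟩ ⟨s - 1 - (i : ℕ), by omega⟩ := by
        simp only [tildeMat, Matrix.of_apply, Fin.val_mk]
        rw [dif_pos (by have := i.isLt; omega)]
        congr 1
        apply Fin.ext
        simp only [Fin.val_mk]
        omega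
      rw [t2]
      ring
  · rw [sum_mul_companion_col p (fun k => tildeMat M i k) j hj, if_neg hj]
    by_cases hi0 : (i : ℕ) = 0
    · rw [dif_neg (by omega), if_pos hi0, sub_zero, sub_zero]
      simp only [tildeMat, Matrix.of_apply, Fin.val_mk]
      rw [dif_pos (by omega)]
      have e : (⟨(j : ℕ) + 1 - (i : ℕ) - 1, by have := j.isLt; omega⟩ : Fin s) = j :=
        Fin.ext (by simp only [Fin.val_mk]; omega)
      rw [e]
    · rw [if_neg hi0, dif_pos (show 1 ≤ (i : ℕ) by omega), sub_zero]
      simp only [tildeMat, Matrix.of_apply, Fin.val_mk]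
      by_cases hij : (i : ℕ) ≤ (j : ℕ)
      · rw [dif_pos (by omega), dif_pos (by omega)]
        have e : (⟨(j : ℕ) + 1 - (i : ℕ) - 1, by have := j.isLt; omega⟩ : Fin s)
            = ⟨(j : ℕ) - ((i : ℕ) - 1) - 1, by have := j.isLt; omega⟩ :=
          Fin.ext (by simp only [Fin.val_mk]; omega)
        rw [e, sub_self]
      · rw [dif_neg (by omega), dif_neg (by omega), sub_self]

end Aux

def toeplitzOf {F : Type*} [Field F] {s ℓ : ℕ} (B : Fin ℓ → Matrix (Fin s) (Fin s) F) :
    Matrix (Fin ℓ × Fin s) (Fin ℓ × Fin s) F :=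
  Matrix.of fun x y =>
    if h : (y.1 : ℕ) ≤ (x.1 : ℕ) then
      B ⟨(x.1 : ℕ) - (y.1 : ℕ), by have := x.1.isLt; omega⟩ x.2 y.2
    else 0

section Llevel

variable {F : Type*} [Field F] {s ℓ : ℕ} (p : Polynomial F)

lemma mul_genJordan_apply (T : Matrix (Fin ℓ × Fin s) (Fin ℓ × Fin s) F)
    (i : Fin ℓ) (u : Fin s) (j : Fin ℓ) (v : Fin s) :
    (T * genJordanBlock F s ℓ p) (i, u) (j, v)
      = (∑ w : Fin s, T (i, u) (j, w) * companionMat F s p w v)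
        + (if h : (j : ℕ) + 1 < ℓ then
            ∑ w : Fin s, T (i, u) (⟨(j : ℕ) + 1, h⟩, w) * Emat F s w v else 0) := by
  rw [Matrix.mul_apply, Fintype.sum_prod_type]
  have step : ∀ k : Fin ℓ,
      (∑ w : Fin s, T (i, u) (k, w) * genJordanBlock F s ℓ p (k, w) (j, v))
      = (if k = j then ∑ w : Fin s, T (i, u) (j, w) * companionMat F s p w v else 0)
        + (if (k : ℕ) = (j : ℕ) + 1 then
            ∑ w : Fin s, T (i, u) (k, w) * Emat F s w v else 0) := by
    intro k
    by_cases h1 : k = j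
    · subst h1
      rw [if_pos rfl, if_neg (by omega), add_zero]
      apply Finset.sum_congr rfl
      intro w _
      simp [genJordanBlock]
    · rw [if_neg h1]
      by_cases h2 : (k : ℕ) = (j : ℕ) + 1
      · rw [if_pos h2, zero_add]
        apply Finset.sum_congr rfl
        intro w _
        simp [genJordanBlock, h1, h2]
      · rw [if_neg h2, add_zero]
        apply Finset.sum_eq_zero
        intro w _
        simp [genJordanBlock, h1, h2]
  rw [Finset.sum_congr rfl fun k _ => step k, Finset.sum_add_distrib]
  congr 1
  · rw [Finset.sum_ite_eq' Finset.univ j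
      (fun _ => ∑ w : Fin s, T (i, u) (j, w) * companionMat F s p w v),
      if_pos (Finset.mem_univ _)]
  · rw [sum_ite_val (fun k => ∑ w : Fin s, T (i, u) (k, w) * Emat F s w v) ((j : ℕ) + 1)]

lemma genJordan_mul_apply (T : Matrix (Fin ℓ × Fin s) (Fin ℓ × Fin s) F)
    (i : Fin ℓ) (u : Fin s) (j : Fin ℓ) (v : Fin s) :
    (genJordanBlock F s ℓ p * T) (i, u) (j, v)
      = (∑ w : Fin s, companionMat F s p u w * T (i, w) (j, v))
        + (if h : 1 ≤ (i : ℕ) then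
            ∑ w : Fin s, Emat F s u w *
              T (⟨(i : ℕ) - 1, by have := i.isLt; omega⟩, w) (j, v) else 0) := by
  rw [Matrix.mul_apply, Fintype.sum_prod_type]
  have step : ∀ k : Fin ℓ,
      (∑ w : Fin s, genJordanBlock F s ℓ p (i, u) (k, w) * T (k, w) (j, v))
      = (if i = k then ∑ w : Fin s, companionMat F s p u w * T (i, w) (j, v) else 0)
        + (if ((k : ℕ) = (i : ℕ) - 1 ∧ 1 ≤ (i : ℕ)) then
            ∑ w : Fin s, Emat F s u w * T (k, w) (j, v) else 0) := by
    intro k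
    by_cases h1 : i = k
    · subst h1
      rw [if_pos rfl, if_neg (by omega), add_zero]
      apply Finset.sum_congr rfl
      intro w _
      simp [genJordanBlock]
    · rw [if_neg h1]
      by_cases h2 : (i : ℕ) = (k : ℕ) + 1
      · rw [if_pos (by omega), zero_add]
        apply Finset.sum_congr rfl
        intro w _
        simp [genJordanBlock, h1, h2]
      · rw [if_neg (by omega), add_zero]
        apply Finset.sum_eq_zero
        intro w _
        simp [genJordanBlock, h1, h2]
  rw [Finset.sum_congr rfl fun k _ => step k, Finset.sum_add_distrib]
  congr 1
  · rw [Finset.sum_ite_eq Finset.univ i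
      (fun _ => ∑ w : Fin s, companionMat F s p u w * T (i, w) (j, v)),
      if_pos (Finset.mem_univ _)]
  · by_cases h3 : 1 ≤ (i : ℕ)
    · have conv1 : ∀ k : Fin ℓ, (if ((k : ℕ) = (i : ℕ) - 1 ∧ 1 ≤ (i : ℕ)) then
            ∑ w : Fin s, Emat F s u w * T (k, w) (j, v) else 0)
          = (if (k : ℕ) = (i : ℕ) - 1 then
            ∑ w : Fin s, Emat F s u w * T (k, w) (j, v) else 0) := by
        intro k; simp [h3]
      rw [Finset.sum_congr rfl fun k _ => conv1 k,
        sum_ite_val (fun k => ∑ w : Fin s, Emat F s u w * T (k, w) (j, v)) ((i : ℕ) - 1),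
        dif_pos (show (i : ℕ) - 1 < ℓ by have := i.isLt; omega), dif_pos h3]
    · rw [dif_neg h3]
      apply Finset.sum_eq_zero
      intro k _
      rw [if_neg]
      rintro ⟨_, h⟩; exact h3 h

lemma toeplitz_comm_genJordan (hs : 0 < s) (hℓ : 0 < ℓ)
    (B : Fin ℓ → Matrix (Fin s) (Fin s) F)
    (hB0 : B ⟨0, hℓ⟩ * companionMat F s p = companionMat F s p * B ⟨0, hℓ⟩)
    (hB : ∀ (k : ℕ) (hk : k < ℓ), 1 ≤ k →
      B ⟨k, hk⟩ * companionMat F s p + B ⟨k - 1, by omega⟩ * Emat F s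
        = companionMat F s p * B ⟨k, hk⟩ + Emat F s * B ⟨k - 1, by omega⟩) :
    toeplitzOf B * genJordanBlock F s ℓ p = genJordanBlock F s ℓ p * toeplitzOf B := by
  ext ⟨i, u⟩ ⟨j, v⟩
  rw [mul_genJordan_apply, genJordan_mul_apply]
  have e1 : (∑ w : Fin s, toeplitzOf B (i, u) (j, w) * companionMat F s p w v)
      = if h : (j : ℕ) ≤ (i : ℕ) then
          (B ⟨(i : ℕ) - (j : ℕ), by have := i.isLt; omega⟩ * companionMat F s p) u v
        else 0 := by
    by_cases h : (j : ℕ) ≤ (i : ℕ)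
    · rw [dif_pos h, Matrix.mul_apply]
      apply Finset.sum_congr rfl
      intro w _
      simp only [toeplitzOf, Matrix.of_apply]
      rw [dif_pos h]
    · rw [dif_neg h]
      apply Finset.sum_eq_zero
      intro w _
      simp only [toeplitzOf, Matrix.of_apply]
      rw [dif_neg h, zero_mul]
  have e2 : ∀ (h2 : (j : ℕ) + 1 < ℓ),
      (∑ w : Fin s, toeplitzOf B (i, u) (⟨(j : ℕ) + 1, h2⟩, w) * Emat F s w v)
      = if h : (j : ℕ) + 1 ≤ (i : ℕ) then
          (B ⟨(i : ℕ) - ((j : ℕ) + 1), by have := i.isLt; omega⟩ * Emat F s) u v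
        else 0 := by
    intro h2
    by_cases h : (j : ℕ) + 1 ≤ (i : ℕ)
    · rw [dif_pos h, Matrix.mul_apply]
      apply Finset.sum_congr rfl
      intro w _
      simp only [toeplitzOf, Matrix.of_apply, Fin.val_mk]
      rw [dif_pos h]
    · rw [dif_neg h]
      apply Finset.sum_eq_zero
      intro w _
      simp only [toeplitzOf, Matrix.of_apply, Fin.val_mk]
      rw [dif_neg h, zero_mul]
  have e3 : (∑ w : Fin s, companionMat F s p u w * toeplitzOf B (i, w) (j, v))
      = if h : (j : ℕ) ≤ (i : ℕ) then
          (companionMat F s p * B ⟨(i : ℕ) - (j : ℕ), by have := i.isLt; omega⟩) u v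
        else 0 := by
    by_cases h : (j : ℕ) ≤ (i : ℕ)
    · rw [dif_pos h, Matrix.mul_apply]
      apply Finset.sum_congr rfl
      intro w _
      simp only [toeplitzOf, Matrix.of_apply]
      rw [dif_pos h]
    · rw [dif_neg h]
      apply Finset.sum_eq_zero
      intro w _
      simp only [toeplitzOf, Matrix.of_apply]
      rw [dif_neg h, mul_zero]
  have e4 : ∀ (h3 : 1 ≤ (i : ℕ)),
      (∑ w : Fin s, Emat F s u w *
          toeplitzOf B (⟨(i : ℕ) - 1, by have := i.isLt; omega⟩, w) (j, v))
      = if h : (j : ℕ) ≤ (i : ℕ) - 1 then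
          (Emat F s * B ⟨(i : ℕ) - 1 - (j : ℕ), by have := i.isLt; omega⟩) u v
        else 0 := by
    intro h3
    by_cases h : (j : ℕ) ≤ (i : ℕ) - 1
    · rw [dif_pos h, Matrix.mul_apply]
      apply Finset.sum_congr rfl
      intro w _
      simp only [toeplitzOf, Matrix.of_apply, Fin.val_mk]
      rw [dif_pos h]
    · rw [dif_neg h]
      apply Finset.sum_eq_zero
      intro w _
      simp only [toeplitzOf, Matrix.of_apply, Fin.val_mk]
      rw [dif_neg h, mul_zero]
  rw [e1, e3]
  rcases Nat.lt_trichotomy (j : ℕ) (i : ℕ) with hji | hji | hji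
  · have hc2 : (j : ℕ) + 1 < ℓ := by have := i.isLt; omega
    have hc3 : 1 ≤ (i : ℕ) := by omega
    rw [dif_pos hc2, dif_pos hc3, e2 hc2, e4 hc3,
      dif_pos (by omega : (j : ℕ) ≤ (i : ℕ)), dif_pos (by omega : (j : ℕ) ≤ (i : ℕ)),
      dif_pos (by omega : (j : ℕ) + 1 ≤ (i : ℕ)), dif_pos (by omega : (j : ℕ) ≤ (i : ℕ) - 1)]
    have hb := hB ((i : ℕ) - (j : ℕ)) (by have := i.isLt; omega) (by omega)
    have a1 : (⟨(i : ℕ) - ((j : ℕ) + 1), by have := i.isLt; omega⟩ : Fin ℓ)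
        = ⟨(i : ℕ) - (j : ℕ) - 1, by have := i.isLt; omega⟩ :=
      Fin.ext (by simp only [Fin.val_mk]; omega)
    have a2 : (⟨(i : ℕ) - 1 - (j : ℕ), by have := i.isLt; omega⟩ : Fin ℓ)
        = ⟨(i : ℕ) - (j : ℕ) - 1, by have := i.isLt; omega⟩ :=
      Fin.ext (by simp only [Fin.val_mk]; omega)
    rw [a1, a2]
    have hb' := congrFun (congrFun hb u) v
    simp only [Matrix.add_apply] at hb'
    exact hb'
  · rw [dif_pos (by omega : (j : ℕ) ≤ (i : ℕ)), dif_pos (by omega : (j : ℕ) ≤ (i : ℕ))]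
    have hz1 : ¬ ((j : ℕ) + 1 ≤ (i : ℕ)) := by omega
    have z1 : (if h : (j : ℕ) + 1 < ℓ then
        ∑ w : Fin s, toeplitzOf B (i, u) (⟨(j : ℕ) + 1, h⟩, w) * Emat F s w v else 0) = 0 := by
      by_cases hc2 : (j : ℕ) + 1 < ℓ
      · rw [dif_pos hc2, e2 hc2, dif_neg hz1]
      · rw [dif_neg hc2]
    have z2 : (if h : 1 ≤ (i : ℕ) then
        ∑ w : Fin s, Emat F s u w *
          toeplitzOf B (⟨(i : ℕ) - 1, by have := i.isLt; omega⟩, w) (j, v) else 0) = 0 := by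
      by_cases hc3 : 1 ≤ (i : ℕ)
      · rw [dif_pos hc3, e4 hc3, dif_neg (by omega)]
      · rw [dif_neg hc3]
    rw [z1, z2]
    have a3 : (⟨(i : ℕ) - (j : ℕ), by have := i.isLt; omega⟩ : Fin ℓ) = ⟨0, hℓ⟩ :=
      Fin.ext (by simp only [Fin.val_mk]; omega)
    rw [a3, add_zero, add_zero]
    exact congrFun (congrFun hB0 u) v
  · have hz : ¬ ((j : ℕ) ≤ (i : ℕ)) := by omega
    rw [dif_neg hz, dif_neg hz]
    have z1 : (if h : (j : ℕ) + 1 < ℓ then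
        ∑ w : Fin s, toeplitzOf B (i, u) (⟨(j : ℕ) + 1, h⟩, w) * Emat F s w v else 0) = 0 := by
      by_cases hc2 : (j : ℕ) + 1 < ℓ
      · rw [dif_pos hc2, e2 hc2, dif_neg (by omega)]
      · rw [dif_neg hc2]
    have z2 : (if h : 1 ≤ (i : ℕ) then
        ∑ w : Fin s, Emat F s u w *
          toeplitzOf B (⟨(i : ℕ) - 1, by have := i.isLt; omega⟩, w) (j, v) else 0) = 0 := by
      by_cases hc3 : 1 ≤ (i : ℕ)
      · rw [dif_pos hc3, e4 hc3, dif_neg (by omega)]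
      · rw [dif_neg hc3]
    rw [z1, z2]

end Llevel

section Assemble

variable {F : Type*} [Field F] {s ℓ : ℕ} (p : Polynomial F)

lemma tildeMat_zero : tildeMat (0 : Matrix (Fin s) (Fin s) F) = 0 := by
  ext i j
  simp only [tildeMat, Matrix.of_apply, Matrix.zero_apply]
  split_ifs <;> rfl

lemma decomp_of_conditions (hs : 0 < s) (hℓ : 0 < ℓ)
    (B : Fin ℓ → Matrix (Fin s) (Fin s) F)
    (hB0 : B ⟨0, hℓ⟩ * companionMat F s p = companionMat F s p * B ⟨0, hℓ⟩)
    (hB1 : ∀ i : Fin ℓ, ∀ _hi : 1 ≤ (i : ℕ),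
      (B i - tildeMat (B ⟨(i : ℕ) - 1, by have := i.isLt; omega⟩)) * companionMat F s p
        = companionMat F s p *
            (B i - tildeMat (B ⟨(i : ℕ) - 1, by have := i.isLt; omega⟩))) :
    ∀ (m : ℕ) (hm : m < ℓ), ∃ Z N : Matrix (Fin s) (Fin s) F,
      (Z * companionMat F s p = companionMat F s p * Z) ∧ B ⟨m, hm⟩ = Z + tildeMat N := by
  intro m hm
  match m with
  | 0 =>
    refine ⟨B ⟨0, hℓ⟩, 0, hB0, ?_⟩
    rw [tildeMat_zero, add_zero]
  | n + 1 =>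
    refine ⟨B ⟨n + 1, hm⟩ - tildeMat (B ⟨n, by omega⟩), B ⟨n, by omega⟩, ?_, ?_⟩
    · have h := hB1 ⟨n + 1, hm⟩ (by simp)
      simp only [Fin.val_mk, Nat.add_sub_cancel] at h
      exact h
    · rw [sub_add_cancel]

lemma goodRel_of_conditions (hs : 0 < s) (hℓ : 0 < ℓ)
    (B : Fin ℓ → Matrix (Fin s) (Fin s) F)
    (hB0 : B ⟨0, hℓ⟩ * companionMat F s p = companionMat F s p * B ⟨0, hℓ⟩)
    (hB1 : ∀ i : Fin ℓ, ∀ _hi : 1 ≤ (i : ℕ),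
      (B i - tildeMat (B ⟨(i : ℕ) - 1, by have := i.isLt; omega⟩)) * companionMat F s p
        = companionMat F s p *
            (B i - tildeMat (B ⟨(i : ℕ) - 1, by have := i.isLt; omega⟩))) :
    ∀ (m : ℕ) (hm : m < ℓ), goodRel hs p (B ⟨m, hm⟩) := by
  intro m hm
  obtain ⟨Z, N, hZ, hdec⟩ := decomp_of_conditions p hs hℓ B hB0 hB1 m hm
  rw [hdec]
  exact goodRel_add p hs (goodRel_of_comm p hs Z hZ) (goodRel_tilde p hs N)

lemma block_identity (hs : 0 < s) (hℓ : 0 < ℓ)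
    (B : Fin ℓ → Matrix (Fin s) (Fin s) F)
    (hB0 : B ⟨0, hℓ⟩ * companionMat F s p = companionMat F s p * B ⟨0, hℓ⟩)
    (hB1 : ∀ i : Fin ℓ, ∀ _hi : 1 ≤ (i : ℕ),
      (B i - tildeMat (B ⟨(i : ℕ) - 1, by have := i.isLt; omega⟩)) * companionMat F s p
        = companionMat F s p *
            (B i - tildeMat (B ⟨(i : ℕ) - 1, by have := i.isLt; omega⟩))) :
    ∀ (k : ℕ) (hk : k < ℓ), 1 ≤ k →
      B ⟨k, hk⟩ * companionMat F s p + B ⟨k - 1, by omega⟩ * Emat F s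
        = companionMat F s p * B ⟨k, hk⟩ + Emat F s * B ⟨k - 1, by omega⟩ := by
  intro k hk hk1
  have h1 := hB1 ⟨k, hk⟩ hk1
  simp only [Fin.val_mk] at h1
  rw [sub_mul, mul_sub] at h1
  have h2 := tilde_comm p hs (B ⟨k - 1, by omega⟩)
    (goodRel_of_conditions p hs hℓ B hB0 hB1 (k - 1) (by omega))
  rw [← sub_eq_zero]
  have expand : B ⟨k, hk⟩ * companionMat F s p + B ⟨k - 1, by omega⟩ * Emat F s
        - (companionMat F s p * B ⟨k, hk⟩ + Emat F s * B ⟨k - 1, by omega⟩)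
      = ((B ⟨k, hk⟩ * companionMat F s p
            - tildeMat (B ⟨k - 1, by omega⟩) * companionMat F s p)
          - (companionMat F s p * B ⟨k, hk⟩
            - companionMat F s p * tildeMat (B ⟨k - 1, by omega⟩)))
        + ((tildeMat (B ⟨k - 1, by omega⟩) * companionMat F s p
            - companionMat F s p * tildeMat (B ⟨k - 1, by omega⟩))
          - (Emat F s * B ⟨k - 1, by omega⟩ - B ⟨k - 1, by omega⟩ * Emat F s)) := by
    abel
  rw [expand, h1, h2]
  abel

def Zaux {F : Type*} [Field F] {s ℓ : ℕ} (hs : 0 < s) (hℓ : 0 < ℓ) (p : Polynomial F)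
    (X : Matrix (Fin ℓ × Fin s) (Fin ℓ × Fin s) F) (n : ℕ) : Matrix (Fin s) (Fin s) F :=
  if h : n < ℓ then
    ∑ m : Fin s, X (⟨n, h⟩, m) (⟨0, hℓ⟩, ⟨0, hs⟩) • (companionMat F s p) ^ (m : ℕ)
  else 0

def Baux {F : Type*} [Field F] {s ℓ : ℕ} (hs : 0 < s) (hℓ : 0 < ℓ) (p : Polynomial F)
    (X : Matrix (Fin ℓ × Fin s) (Fin ℓ × Fin s) F) (n : ℕ) : Matrix (Fin s) (Fin s) F :=
  Nat.rec (Zaux hs hℓ p X 0) (fun n ih => Zaux hs hℓ p X (n + 1) + tildeMat ih) n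

lemma Zaux_comm (hs : 0 < s) (hℓ : 0 < ℓ)
    (X : Matrix (Fin ℓ × Fin s) (Fin ℓ × Fin s) F) (n : ℕ) :
    Zaux hs hℓ p X n * companionMat F s p = companionMat F s p * Zaux hs hℓ p X n := by
  rw [Zaux]
  split_ifs with h
  · rw [Finset.sum_mul, Finset.mul_sum]
    apply Finset.sum_congr rfl
    intro m _
    rw [smul_mul_assoc, mul_smul_comm, ← pow_succ, ← pow_succ']
  · rw [zero_mul, mul_zero]

lemma Zaux_col0 (hs : 0 < s) (hℓ : 0 < ℓ)
    (X : Matrix (Fin ℓ × Fin s) (Fin ℓ × Fin s) F) (n : ℕ) (h : n < ℓ) (u : Fin s) :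
    Zaux hs hℓ p X n u ⟨0, hs⟩ = X (⟨n, h⟩, u) (⟨0, hℓ⟩, ⟨0, hs⟩) := by
  rw [Zaux, dif_pos h, Matrix.sum_apply]
  have step : ∀ m : Fin s,
      (X (⟨n, h⟩, m) (⟨0, hℓ⟩, ⟨0, hs⟩) • (companionMat F s p) ^ (m : ℕ)) u ⟨0, hs⟩
      = if (m : ℕ) = (u : ℕ) then X (⟨n, h⟩, m) (⟨0, hℓ⟩, ⟨0, hs⟩) else 0 := by
    intro m
    rw [Matrix.smul_apply, companion_pow_col p hs (m : ℕ) m.isLt u, smul_eq_mul]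
    by_cases hm : (u : ℕ) = (m : ℕ)
    · rw [if_pos hm, if_pos hm.symm, mul_one]
    · rw [if_neg hm, if_neg (fun hh => hm hh.symm), mul_zero]
  rw [Finset.sum_congr rfl fun m _ => step m,
    sum_ite_val (fun m => X (⟨n, h⟩, m) (⟨0, hℓ⟩, ⟨0, hs⟩)) (u : ℕ), dif_pos u.isLt]

lemma Baux_col0 (hs : 0 < s) (hℓ : 0 < ℓ)
    (X : Matrix (Fin ℓ × Fin s) (Fin ℓ × Fin s) F) (n : ℕ) (h : n < ℓ) (u : Fin s) :
    Baux hs hℓ p X n u ⟨0, hs⟩ = X (⟨n, h⟩, u) (⟨0, hℓ⟩, ⟨0, hs⟩) := by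
  match n with
  | 0 => exact Zaux_col0 p hs hℓ X 0 h u
  | n + 1 =>
    show (Zaux hs hℓ p X (n + 1) + tildeMat (Baux hs hℓ p X n)) u ⟨0, hs⟩ = _
    rw [Matrix.add_apply]
    have ht : tildeMat (Baux hs hℓ p X n) u ⟨0, hs⟩ = 0 := by
      simp only [tildeMat, Matrix.of_apply]
      rw [dif_neg (by simp)]
    rw [ht, add_zero]
    exact Zaux_col0 p hs hℓ X (n + 1) h u

end Assemble

section Kernel

variable {F : Type*} [Field F] {s ℓ : ℕ} (p : Polynomial F)

lemma kernel_zero (hs : 0 < s) (hℓ : 0 < ℓ)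
    (D : Matrix (Fin ℓ × Fin s) (Fin ℓ × Fin s) F)
    (hcomm : D * genJordanBlock F s ℓ p = genJordanBlock F s ℓ p * D)
    (hcol : ∀ x, D x (⟨0, hℓ⟩, ⟨0, hs⟩) = 0) : D = 0 := by
  have step1 : ∀ (j : Fin ℓ) (v : ℕ) (hv1 : v + 1 < s),
      (∀ x, D x (j, ⟨v, by omega⟩) = 0) → ∀ x, D x (j, ⟨v + 1, hv1⟩) = 0 := by
    intro j v hv1 hIH x
    obtain ⟨a, b⟩ := x
    have h := congrFun (congrFun hcomm (a, b)) (j, ⟨v, by omega⟩)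
    rw [mul_genJordan_apply, genJordan_mul_apply] at h
    rw [sum_mul_companion_col p (fun w => D (a, b) (j, w)) ⟨v, by omega⟩
      (by simp only [Fin.val_mk]; omega)] at h
    have z1 : (if h2 : (j : ℕ) + 1 < ℓ then
        ∑ w : Fin s, D (a, b) (⟨(j : ℕ) + 1, h2⟩, w) * Emat F s w ⟨v, by omega⟩
        else 0) = 0 := by
      by_cases h2 : (j : ℕ) + 1 < ℓ
      · rw [dif_pos h2]
        apply Finset.sum_eq_zero
        intro w _
        have he : Emat F s w ⟨v, by omega⟩ = 0 := by
          simp only [Emat, Matrix.of_apply, Fin.val_mk]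
          rw [if_neg]
          rintro ⟨_, hh⟩; omega
        rw [he, mul_zero]
      · rw [dif_neg h2]
    rw [z1, add_zero] at h
    rw [Finset.sum_eq_zero (fun w _ => by rw [hIH (a, w), mul_zero])] at h
    have z2 : (if h3 : 1 ≤ (a : ℕ) then
        ∑ w : Fin s, Emat F s b w *
          D (⟨(a : ℕ) - 1, by have := a.isLt; omega⟩, w) (j, ⟨v, by omega⟩)
        else 0) = 0 := by
      by_cases h3 : 1 ≤ (a : ℕ)
      · rw [dif_pos h3]
        apply Finset.sum_eq_zero
        intro w _
        rw [hIH (⟨(a : ℕ) - 1, by have := a.isLt; omega⟩, w), mul_zero]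
      · rw [dif_neg h3]
    rw [z2, add_zero] at h
    simpa using h
  have step2 : ∀ (j : ℕ) (hj1 : j + 1 < ℓ),
      (∀ (v' : Fin s) x, D x (⟨j, by omega⟩, v') = 0) →
      ∀ x, D x (⟨j + 1, hj1⟩, ⟨0, hs⟩) = 0 := by
    intro j hj1 hQ x
    obtain ⟨a, b⟩ := x
    have h := congrFun (congrFun hcomm (a, b)) (⟨j, by omega⟩, ⟨s - 1, by omega⟩)
    rw [mul_genJordan_apply, genJordan_mul_apply] at h
    rw [sum_mul_companion_lastcol p (fun w => D (a, b) (⟨j, by omega⟩, w)) ⟨s - 1, by omega⟩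
      (by simp only [Fin.val_mk])] at h
    rw [Finset.sum_eq_zero (fun w _ => by rw [hQ w (a, b), zero_mul]), neg_zero] at h
    simp only [Fin.val_mk] at h
    rw [dif_pos hj1] at h
    rw [sum_mul_E hs (fun w => D (a, b) (⟨j + 1, hj1⟩, w)) ⟨s - 1, by omega⟩,
      if_pos (by simp only [Fin.val_mk])] at h
    rw [Finset.sum_eq_zero (fun w _ => by rw [hQ ⟨s - 1, by omega⟩ (a, w), mul_zero])] at h
    have z2 : (if h3 : 1 ≤ (a : ℕ) then
        ∑ w : Fin s, Emat F s b w *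
          D (⟨(a : ℕ) - 1, by have := a.isLt; omega⟩, w) (⟨j, by omega⟩, ⟨s - 1, by omega⟩)
        else 0) = 0 := by
      by_cases h3 : 1 ≤ (a : ℕ)
      · rw [dif_pos h3]
        apply Finset.sum_eq_zero
        intro w _
        rw [hQ ⟨s - 1, by omega⟩ (⟨(a : ℕ) - 1, by have := a.isLt; omega⟩, w), mul_zero]
      · rw [dif_neg h3]
    rw [z2, add_zero] at h
    simpa using h
  have colzero : ∀ (j : ℕ) (hj : j < ℓ) (v : ℕ) (hv : v < s) (x : Fin ℓ × Fin s),
      D x (⟨j, hj⟩, ⟨v, hv⟩) = 0 := by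
    intro j
    induction j with
    | zero =>
      intro hj v
      induction v with
      | zero => intro hv x; exact hcol x
      | succ v ihv => intro hv x; exact step1 ⟨0, hj⟩ v hv (fun x' => ihv (by omega) x') x
    | succ j ihj =>
      intro hj v
      induction v with
      | zero => intro hv x; exact step2 j hj (fun v' x' => ihj (by omega) (v' : ℕ) v'.isLt x') x
      | succ v ihv => intro hv x; exact step1 ⟨j + 1, hj⟩ v hv (fun x' => ihv (by omega) x') x
  ext x y
  obtain ⟨jj, vv⟩ := y
  rw [Matrix.zero_apply]
  exact colzero (jj : ℕ) jj.isLt (vv : ℕ) vv.isLt x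

end Kernel

/-- `X` commutes with the generalized Jordan block `G` of size `ℓ`
iff `X` is block lower triangular block-Toeplitz with blocks `X_1, …, X_ℓ` where
`X_1 ∈ Z(C)` and `X_i - X̃_{i-1} ∈ Z(C)` for `i = 2, …, ℓ`. -/
theorem centralizer_genJordanBlock
    {F : Type*} [Field F] {s ℓ : ℕ} (hs : 0 < s) (hℓ : 0 < ℓ)
    (p : Polynomial F) (hmonic : p.Monic) (hirr : Irreducible p)
    (hdeg : p.natDegree = s)
    (X : Matrix (Fin ℓ × Fin s) (Fin ℓ × Fin s) F) :
    X * genJordanBlock F s ℓ p = genJordanBlock F s ℓ p * X ↔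
      ∃ B : Fin ℓ → Matrix (Fin s) (Fin s) F,
        (B ⟨0, hℓ⟩ * companionMat F s p = companionMat F s p * B ⟨0, hℓ⟩) ∧
        (∀ i : Fin ℓ, ∀ _hi : 1 ≤ (i : ℕ),
          (B i - tildeMat (B ⟨(i : ℕ) - 1, by have := i.isLt; omega⟩)) *
              companionMat F s p =
            companionMat F s p *
              (B i - tildeMat (B ⟨(i : ℕ) - 1, by have := i.isLt; omega⟩))) ∧
        (∀ x y : Fin ℓ × Fin s,
          X x y =
            if h : (y.1 : ℕ) ≤ (x.1 : ℕ) then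
              B ⟨(x.1 : ℕ) - (y.1 : ℕ), by have := x.1.isLt; omega⟩ x.2 y.2
            else 0) := by
  constructor
  · intro hcomm
    have c1 : Baux hs hℓ p X 0 * companionMat F s p
        = companionMat F s p * Baux hs hℓ p X 0 := Zaux_comm p hs hℓ X 0
    have c2 : ∀ i : Fin ℓ, 1 ≤ (i : ℕ) →
        (Baux hs hℓ p X (i : ℕ) - tildeMat (Baux hs hℓ p X ((i : ℕ) - 1)))
            * companionMat F s p
          = companionMat F s p *
            (Baux hs hℓ p X (i : ℕ) - tildeMat (Baux hs hℓ p X ((i : ℕ) - 1))) := by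
      intro i hi
      obtain ⟨n, hn⟩ : ∃ n, (i : ℕ) = n + 1 := ⟨(i : ℕ) - 1, by omega⟩
      rw [hn]
      have hb : Baux hs hℓ p X (n + 1)
          = Zaux hs hℓ p X (n + 1) + tildeMat (Baux hs hℓ p X n) := rfl
      rw [Nat.add_sub_cancel, hb, add_sub_cancel_right]
      exact Zaux_comm p hs hℓ X (n + 1)
    have c1' : (fun i : Fin ℓ => Baux hs hℓ p X (i : ℕ)) ⟨0, hℓ⟩ * companionMat F s p
        = companionMat F s p * (fun i : Fin ℓ => Baux hs hℓ p X (i : ℕ)) ⟨0, hℓ⟩ := c1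
    have c2' : ∀ i : Fin ℓ, ∀ _hi : 1 ≤ (i : ℕ),
        ((fun i : Fin ℓ => Baux hs hℓ p X (i : ℕ)) i -
            tildeMat ((fun i : Fin ℓ => Baux hs hℓ p X (i : ℕ))
              ⟨(i : ℕ) - 1, by have := i.isLt; omega⟩)) * companionMat F s p
          = companionMat F s p *
            ((fun i : Fin ℓ => Baux hs hℓ p X (i : ℕ)) i -
              tildeMat ((fun i : Fin ℓ => Baux hs hℓ p X (i : ℕ))
                ⟨(i : ℕ) - 1, by have := i.isLt; omega⟩)) := fun i hi => c2 i hi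
    have hT := toeplitz_comm_genJordan p hs hℓ (fun i : Fin ℓ => Baux hs hℓ p X (i : ℕ))
      c1' (block_identity p hs hℓ _ c1' c2')
    have hD : (X - toeplitzOf (fun i : Fin ℓ => Baux hs hℓ p X (i : ℕ)))
          * genJordanBlock F s ℓ p
        = genJordanBlock F s ℓ p *
          (X - toeplitzOf (fun i : Fin ℓ => Baux hs hℓ p X (i : ℕ))) := by
      rw [sub_mul, mul_sub, hcomm, hT]
    have hDc : ∀ x, (X - toeplitzOf (fun i : Fin ℓ => Baux hs hℓ p X (i : ℕ)))
        x (⟨0, hℓ⟩, ⟨0, hs⟩) = 0 := by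
      intro x
      obtain ⟨a, b⟩ := x
      rw [Matrix.sub_apply]
      have ht : toeplitzOf (fun i : Fin ℓ => Baux hs hℓ p X (i : ℕ)) (a, b)
          (⟨0, hℓ⟩, ⟨0, hs⟩) = X (a, b) (⟨0, hℓ⟩, ⟨0, hs⟩) := by
        simp only [toeplitzOf, Matrix.of_apply]
        rw [dif_pos (Nat.zero_le _)]
        exact Baux_col0 p hs hℓ X (a : ℕ) a.isLt b
      rw [ht, sub_self]
    have hzero := kernel_zero p hs hℓ _ hD hDc
    have hXt : X = toeplitzOf (fun i : Fin ℓ => Baux hs hℓ p X (i : ℕ)) := by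
      rwa [sub_eq_zero] at hzero
    refine ⟨fun i : Fin ℓ => Baux hs hℓ p X (i : ℕ), c1', c2', ?_⟩
    intro x y
    conv_lhs => rw [hXt]
    rfl
  · rintro ⟨B, hB0, hB1, hX⟩
    have hXeq : X = toeplitzOf B := by
      ext x y
      rw [hX x y]
      rfl
    rw [hXeq]
    exact toeplitz_comm_genJordan p hs hℓ B hB0 (block_identity p hs hℓ B hB0 hB1)
end

section
/- Let F be a field, p a monic irreducible polynomial of degree s over F, and G ∈ M_{sℓ}(F) the generalized Jordan block of size ℓ associated with p. Then the set Z(G) = {X ∈ M_{sℓ}(F) : GX = XG} is an F-vector subspace of M_{sℓ}(F) of dimension ℓs. -/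
open Matrix Polynomial

/-!
The unit vector `e₍₀,₀₎` is a cyclic vector of the generalized Jordan block `G`: inside a block
`G` shifts `e₍ⱼ,b₎` to `e₍ⱼ,b+1₎`, and since the last column of `C` carries the coefficients of
`p`, `p(G)` shifts `e₍ⱼ,₀₎` to `e₍ⱼ₊₁,₀₎`, so `Gᵇ p(G)ʲ e₍₀,₀₎ = e₍ⱼ,b₎`. For any matrix `A` with a cyclic vector `v`, evaluation
`X ↦ X v` is an isomorphism from the centralizer of `A` onto `Fⁿ`: a matrix commuting with `A`
commutes with every `q(A)`, so it is determined by `X v`, and `q(A) v` is hit by `q(A)` itself.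
-/

section Centralizer

variable {R A : Type*} [CommSemiring R] [Semiring A] [Algebra R A]

theorem Polynomial.aeval_mem_centralizer_centralizer (a : A) (q : R[X]) :
    aeval a q ∈ Subalgebra.centralizer R (Subalgebra.centralizer R {a} : Set A) :=
  Algebra.adjoin_le_centralizer_centralizer R {a} (aeval_mem_adjoin_singleton R a)

theorem Polynomial.aeval_mem_centralizer (a : A) (q : R[X]) :
    aeval a q ∈ Subalgebra.centralizer R {a} := by
  simp only [Subalgebra.mem_centralizer_iff, Set.mem_singleton_iff, forall_eq]
  simpa using ((Commute.all X q).map (aeval a)).eq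

end Centralizer

section Cyclic

variable {F : Type*} [Field F] {n : Type*} [Fintype n] [DecidableEq n]

def Matrix.IsCyclicVector (A : Matrix n n F) (v : n → F) : Prop :=
  ∀ w : n → F, ∃ q : F[X], aeval A q *ᵥ v = w

theorem Matrix.IsCyclicVector.finrank_centralizer {A : Matrix n n F} {v : n → F}
    (hv : A.IsCyclicVector v) :
    Module.finrank F (Subalgebra.centralizer F {A}) = Fintype.card n := by
  let evalAt : Subalgebra.centralizer F {A} →ₗ[F] n → F :=
    { toFun := fun X => (X : Matrix n n F) *ᵥ v
      map_add' := fun X Y => add_mulVec _ _ _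
      map_smul' := fun c X => smul_mulVec _ _ _ }
  have injective : Function.Injective evalAt := by
    rw [injective_iff_map_eq_zero]
    intro X hX
    ext1
    refine mulVec_injective (funext fun w => ?_)
    obtain ⟨q, rfl⟩ := hv w
    have hcomm : (X : Matrix n n F) * aeval A q = aeval A q * X :=
      ((Subalgebra.mem_centralizer_iff F).1 (aeval_mem_centralizer_centralizer A q) X X.2)
    rw [mulVec_mulVec, hcomm, ← mulVec_mulVec]
    change aeval A q *ᵥ evalAt X = _
    rw [hX, mulVec_zero, ZeroMemClass.coe_zero, zero_mulVec]
  have surjective : Function.Surjective evalAt := fun w =>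
    let ⟨q, hq⟩ := hv w
    ⟨⟨aeval A q, aeval_mem_centralizer A q⟩, hq⟩
  rw [(LinearEquiv.ofBijective evalAt ⟨injective, surjective⟩).finrank_eq,
    Module.finrank_fintype_fun_eq_card]

end Cyclic

section GenJordanBlock

variable {F : Type*} [Field F] {s ℓ : ℕ} (p : F[X])

theorem genJordanBlock_mulVec_single_of_succ_lt (j : Fin ℓ) (b : Fin s) (hb : (b : ℕ) + 1 < s) :
    genJordanBlock F s ℓ p *ᵥ Pi.single (j, b) 1 = Pi.single (j, ⟨b + 1, hb⟩) 1 := by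
  ext ⟨i, a⟩
  have hb_ne : (b : ℕ) ≠ s - 1 := by omega
  simp only [mulVec_single, genJordanBlock, companionMat, Emat, of_apply,
    Pi.single_apply, Prod.mk.injEq, Fin.ext_iff]
  split_ifs <;> simp_all

theorem genJordanBlock_mulVec_single_last (j : Fin ℓ) (hj : (j : ℕ) + 1 < ℓ) (hs : 0 < s) :
    genJordanBlock F s ℓ p *ᵥ Pi.single (j, ⟨s - 1, by omega⟩) 1 =
      Pi.single (⟨j + 1, hj⟩, ⟨0, hs⟩) 1 - ∑ a : Fin s, p.coeff a • Pi.single (j, a) 1 := by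
  ext ⟨i, a⟩
  simp only [mulVec_single, genJordanBlock, companionMat, Emat, of_apply, Pi.sub_apply, Finset.sum_apply, Pi.smul_apply, Pi.single_apply, Prod.mk.injEq, smul_eq_mul,
    mul_ite, mul_one, mul_zero]
  by_cases hij : i = j
  · subst hij
    simp only [true_and, Finset.sum_ite_eq, Finset.mem_univ, if_true]
    simp [Fin.ext_iff]
  · simp [hij, Fin.ext_iff, Fin.val_ne_of_ne hij, ite_and]

theorem genJordanBlock_pow_mulVec_single_zero (j : Fin ℓ) (i : ℕ) (hi : i < s) :
    genJordanBlock F s ℓ p ^ i *ᵥ Pi.single (j, ⟨0, by omega⟩) 1 = Pi.single (j, ⟨i, hi⟩) 1 := by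
  induction i with
  | zero => rw [pow_zero, one_mulVec]
  | succ i ih =>
    rw [pow_succ', ← mulVec_mulVec, ih (by omega)]
    exact genJordanBlock_mulVec_single_of_succ_lt p j ⟨i, by omega⟩ hi

variable {p}

theorem aeval_genJordanBlock_mulVec_single_zero (hmonic : p.Monic) (hdeg : p.natDegree = s)
    (j : Fin ℓ) (hj : (j : ℕ) + 1 < ℓ) (hs : 0 < s) :
    aeval (genJordanBlock F s ℓ p) p *ᵥ Pi.single (j, ⟨0, hs⟩) 1 =
      Pi.single (⟨j + 1, hj⟩, ⟨0, hs⟩) 1 := by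
  set G := genJordanBlock F s ℓ p
  have top_term : G ^ s *ᵥ Pi.single (j, ⟨0, hs⟩) 1 =
      Pi.single (⟨j + 1, hj⟩, ⟨0, hs⟩) 1 - ∑ a : Fin s, p.coeff a • Pi.single (j, a) 1 := by
    obtain ⟨t, rfl⟩ : ∃ t, s = t + 1 := ⟨s - 1, by omega⟩
    rw [pow_succ', ← mulVec_mulVec, genJordanBlock_pow_mulVec_single_zero p j t (by omega)]
    exact genJordanBlock_mulVec_single_last p j hj hs
  have lower_terms : ∑ i ∈ Finset.range s, (p.coeff i • G ^ i) *ᵥ Pi.single (j, ⟨0, hs⟩) 1 =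
      ∑ a : Fin s, p.coeff a • Pi.single (j, a) 1 := by
    rw [← Fin.sum_univ_eq_sum_range (fun i => (p.coeff i • G ^ i) *ᵥ Pi.single (j, ⟨0, hs⟩) 1)]
    refine Finset.sum_congr rfl fun a _ => ?_
    rw [smul_mulVec, genJordanBlock_pow_mulVec_single_zero p j a a.is_lt]
  have leading : p.coeff s = 1 := hdeg ▸ hmonic.coeff_natDegree
  rw [aeval_eq_sum_range, hdeg, Finset.sum_range_succ, add_mulVec, sum_mulVec, lower_terms,
    smul_mulVec, leading, one_smul, top_term, add_sub_cancel]

theorem aeval_X_pow_mul_pow_genJordanBlock_mulVec_single (hmonic : p.Monic)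
    (hdeg : p.natDegree = s) (j : Fin ℓ) (b : Fin s) :
    aeval (genJordanBlock F s ℓ p) (X ^ (b : ℕ) * p ^ (j : ℕ)) *ᵥ
      Pi.single (⟨0, j.pos⟩, ⟨0, b.pos⟩) 1 = Pi.single (j, b) 1 := by
  have block_shift : ∀ (k : ℕ) (hk : k < ℓ), aeval (genJordanBlock F s ℓ p) p ^ k *ᵥ
      Pi.single (⟨0, j.pos⟩, ⟨0, b.pos⟩) 1 = Pi.single (⟨k, hk⟩, ⟨0, b.pos⟩) 1 := by
    intro k hk
    induction k with
    | zero => rw [pow_zero, one_mulVec]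
    | succ k ih =>
      rw [pow_succ', ← mulVec_mulVec, ih (by omega)]
      exact aeval_genJordanBlock_mulVec_single_zero hmonic hdeg ⟨k, by omega⟩ hk b.pos
  rw [map_mul, map_pow, map_pow, aeval_X, ← mulVec_mulVec, block_shift j j.is_lt]
  exact genJordanBlock_pow_mulVec_single_zero p j b b.is_lt

theorem genJordanBlock_exists_isCyclicVector (hmonic : p.Monic) (hdeg : p.natDegree = s) :
    ∃ v, (genJordanBlock F s ℓ p).IsCyclicVector v := by
  rcases isEmpty_or_nonempty (Fin ℓ × Fin s) with _ | ⟨j₀, b₀⟩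
  · exact ⟨0, fun w => ⟨0, Subsingleton.elim _ _⟩⟩
  refine ⟨Pi.single (⟨0, j₀.pos⟩, ⟨0, b₀.pos⟩) 1, fun w =>
    ⟨∑ x : Fin ℓ × Fin s, w x • (X ^ (x.2 : ℕ) * p ^ (x.1 : ℕ)), ?_⟩⟩
  simp only [map_sum, map_smul, sum_mulVec, smul_mulVec,
    aeval_X_pow_mul_pow_genJordanBlock_mulVec_single hmonic hdeg]
  exact (pi_eq_sum_univ' w).symm

end GenJordanBlock

theorem centralizer_genJordanBlock_dim_general
    {F : Type*} [Field F] {s ℓ : ℕ}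
    (p : Polynomial F) (hmonic : p.Monic)
    (hdeg : p.natDegree = s) :
    ∃ S : Submodule F (Matrix (Fin ℓ × Fin s) (Fin ℓ × Fin s) F),
      (↑S = {X : Matrix (Fin ℓ × Fin s) (Fin ℓ × Fin s) F |
          genJordanBlock F s ℓ p * X = X * genJordanBlock F s ℓ p}) ∧
      Module.finrank F S = ℓ * s := by
  obtain ⟨v, hv⟩ := genJordanBlock_exists_isCyclicVector (ℓ := ℓ) hmonic hdeg
  refine ⟨Subalgebra.toSubmodule (Subalgebra.centralizer F {genJordanBlock F s ℓ p}), ?_, ?_⟩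
  · ext X
    simp [Set.mem_centralizer_iff]
  · rw [Subalgebra.finrank_toSubmodule, hv.finrank_centralizer, Fintype.card_prod,
      Fintype.card_fin, Fintype.card_fin]

/-- the centralizer of the generalized Jordan block of size `ℓ`
associated with a monic irreducible polynomial of degree `s` is an `F`-vector
subspace of `M_{sℓ}(F)` of dimension `ℓs`. -/
theorem centralizer_genJordanBlock_dim
    {F : Type*} [Field F] {s ℓ : ℕ}
    (p : Polynomial F) (hmonic : p.Monic) (hirr : Irreducible p)
    (hdeg : p.natDegree = s) :
    ∃ S : Submodule F (Matrix (Fin ℓ × Fin s) (Fin ℓ × Fin s) F),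
      (↑S = {X : Matrix (Fin ℓ × Fin s) (Fin ℓ × Fin s) F |
          genJordanBlock F s ℓ p * X = X * genJordanBlock F s ℓ p}) ∧
      Module.finrank F S = ℓ * s :=
  centralizer_genJordanBlock_dim_general p hmonic hdeg
end

section
/- Let F be a field, p a monic irreducible polynomial of degree s over F, and let G_1 ∈ M_{sa}(F) and G_2 ∈ M_{sb}(F) be the generalized Jordan blocks of sizes a and b associated with p, with a ≤ b. If T is an sa × sb matrix over F satisfying G_1 T = T G_2, then the last s(b-a) columns of T are zero and the left sa × sa submatrix T_1 of T (formed by the first sa columns) commutes with G_1, i.e. T = [T_1, 0] with T_1 ∈ Z(G_1). -/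
open Matrix Polynomial

/-!
Let `N = p(G)`, where `p` is read as `X^s + ∑_{i<s} p_i X^i`, the polynomial whose companion
matrix is `C`. On standard basis vectors, `G` sends `e_(l,j)` to `e_(l,j+1)` within a block, and
`N` sends the first vector `e_(l,0)` of a block to the first vector of the next block. Hence
`e_(l,j) = G^j N^l e_(0,0)`, and `N^ℓ = 0` for the block of size `ℓ`. An intertwiner `T` carries
`G_b, N_b` to `G_a, N_a`, so `T e_(l,j) = G_a^j N_a^l T e_(0,0)`, which vanishes for `l ≥ a`.
So `T` only sees the first `a` blocks, on which `G_b` restricts to `G_a`, and `G_a T = T G_b`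
restricts to `G_a T_1 = T_1 G_a`.
-/

section Intertwining

variable {m n R : Type*} [Fintype m] [Fintype n] [Semiring R]
  {A : Matrix m m R} {B : Matrix n n R} {T : Matrix m n R}

theorem Matrix.pow_mul_eq_mul_pow_of_mul_eq [DecidableEq m] [DecidableEq n] (h : A * T = T * B)
    (k : ℕ) : A ^ k * T = T * B ^ k := by
  induction k with
  | zero => simp
  | succ k ih =>
    rw [pow_succ', Matrix.mul_assoc, ih, ← Matrix.mul_assoc, h, Matrix.mul_assoc, ← pow_succ']

theorem Matrix.submatrix_mul_comm_of_mul_eq (h : A * T = T * B) {e : m → n} (he : e.Injective)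
    (hB : B.submatrix e e = A) (hT : ∀ x k, k ∉ Set.range e → T x k = 0) :
    T.submatrix id e * A = A * T.submatrix id e := by
  ext x y
  have hxy : (A * T) x (e y) = (T * B) x (e y) := by rw [h]
  simp only [mul_apply, submatrix_apply, id, ← hB] at hxy ⊢
  rw [hxy]
  exact Fintype.sum_of_injective e he _ _ (fun k hk => by rw [hT x k hk, zero_mul]) fun _ => rfl

end Intertwining


-- The basis vector `e_(l,j)`, indexed by `ℕ` so that out-of-range indices give the zero vector.
def blockBasisVec (R : Type*) [Zero R] [One R] (ℓ s l j : ℕ) : Fin ℓ × Fin s → R :=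
  fun x => if (x.1 : ℕ) = l ∧ (x.2 : ℕ) = j then 1 else 0

section BlockBasisVec

variable {R : Type*} [Semiring R] {ℓ s : ℕ}

theorem blockBasisVec_eq_zero {l j : ℕ} (h : ¬(l < ℓ ∧ j < s)) :
    blockBasisVec R ℓ s l j = 0 := by
  funext x
  have := x.1.isLt
  have := x.2.isLt
  simp only [blockBasisVec, Pi.zero_apply]
  rw [if_neg (by omega)]

theorem Pi.single_one_eq_blockBasisVec (y : Fin ℓ × Fin s) :
    Pi.single y 1 = blockBasisVec R ℓ s y.1 y.2 := by
  funext x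
  simp [blockBasisVec, Pi.single_apply, Prod.ext_iff, Fin.ext_iff]

theorem mulVec_blockBasisVec_apply {m : Type*} (M : Matrix m (Fin ℓ × Fin s) R) (l j : ℕ)
    (x : m) :
    (M *ᵥ blockBasisVec R ℓ s l j) x =
      if h : l < ℓ ∧ j < s then M x (⟨l, h.1⟩, ⟨j, h.2⟩) else 0 := by
  split_ifs with h
  · rw [← Pi.single_one_eq_blockBasisVec (⟨l, h.1⟩, ⟨j, h.2⟩), mulVec_single_one]
    rfl
  · rw [blockBasisVec_eq_zero h, mulVec_zero, Pi.zero_apply]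

end BlockBasisVec

section GenJordanBlock

variable {F : Type*} [Field F] {s ℓ : ℕ} (p : Polynomial F)

theorem genJordanBlock_mulVec_blockBasisVec {l j : ℕ} (hj : j + 1 < s) :
    genJordanBlock F s ℓ p *ᵥ blockBasisVec F ℓ s l j = blockBasisVec F ℓ s l (j + 1) := by
  funext x
  rw [mulVec_blockBasisVec_apply]
  simp only [genJordanBlock, companionMat, Emat, of_apply, blockBasisVec, Fin.ext_iff]
  split_ifs <;> first | omega | simp

theorem genJordanBlock_mulVec_blockBasisVec_last (l : ℕ) :
    genJordanBlock F s ℓ p *ᵥ blockBasisVec F ℓ s l (s - 1) +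
        ∑ r ∈ Finset.range s, p.coeff r • blockBasisVec F ℓ s l r =
      blockBasisVec F ℓ s (l + 1) 0 := by
  funext x
  have := x.2.isLt
  rw [Pi.add_apply, mulVec_blockBasisVec_apply, Finset.sum_apply]
  simp only [Pi.smul_apply, smul_eq_mul, blockBasisVec, mul_ite, mul_one, mul_zero]
  simp only [genJordanBlock, companionMat, Emat, of_apply, Fin.ext_iff, ite_and,
    Finset.sum_ite_irrel, Finset.sum_const_zero, Finset.sum_ite_eq, Finset.mem_range, if_pos this]
  split_ifs <;> first | omega | simp

end GenJordanBlock

def blockShift (F : Type*) [Field F] (s ℓ : ℕ) (p : Polynomial F) :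
    Matrix (Fin ℓ × Fin s) (Fin ℓ × Fin s) F :=
  genJordanBlock F s ℓ p ^ s +
    ∑ i ∈ Finset.range s, p.coeff i • genJordanBlock F s ℓ p ^ i

section BlockShift

variable {F : Type*} [Field F] {s : ℕ} {p : Polynomial F}

theorem genJordanBlock_pow_mulVec_blockBasisVec {ℓ j : ℕ} (hj : j < s) (l : ℕ) :
    genJordanBlock F s ℓ p ^ j *ᵥ blockBasisVec F ℓ s l 0 = blockBasisVec F ℓ s l j := by
  induction j with
  | zero => rw [pow_zero, one_mulVec]
  | succ j ih =>
    rw [pow_succ', ← mulVec_mulVec, ih (by omega), genJordanBlock_mulVec_blockBasisVec p hj]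

theorem blockShift_mulVec_blockBasisVec {ℓ : ℕ} (l : ℕ) :
    blockShift F s ℓ p *ᵥ blockBasisVec F ℓ s l 0 = blockBasisVec F ℓ s (l + 1) 0 := by
  rcases Nat.eq_zero_or_pos s with rfl | hs
  · exact funext fun x => x.2.elim0
  rw [← genJordanBlock_mulVec_blockBasisVec_last p, ← genJordanBlock_pow_mulVec_blockBasisVec
    (Nat.sub_lt hs one_pos), mulVec_mulVec, ← pow_succ', Nat.sub_one_add_one hs.ne', blockShift,
    add_mulVec, sum_mulVec]
  refine congrArg₂ _ rfl (Finset.sum_congr rfl fun i hi => ?_)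
  rw [smul_mulVec, genJordanBlock_pow_mulVec_blockBasisVec (Finset.mem_range.mp hi)]

theorem blockShift_pow_mulVec_blockBasisVec {ℓ : ℕ} (k l : ℕ) :
    blockShift F s ℓ p ^ k *ᵥ blockBasisVec F ℓ s l 0 = blockBasisVec F ℓ s (l + k) 0 := by
  induction k with
  | zero => rw [pow_zero, one_mulVec, add_zero]
  | succ k ih => rw [pow_succ', ← mulVec_mulVec, ih, blockShift_mulVec_blockBasisVec, add_assoc]

theorem blockBasisVec_eq_pow_mulVec {ℓ j : ℕ} (hj : j < s) (l : ℕ) :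
    blockBasisVec F ℓ s l j =
      genJordanBlock F s ℓ p ^ j *ᵥ blockShift F s ℓ p ^ l *ᵥ
        blockBasisVec F ℓ s 0 0 := by
  rw [blockShift_pow_mulVec_blockBasisVec, zero_add, genJordanBlock_pow_mulVec_blockBasisVec hj]

theorem blockShift_mul_eq_mul_blockShift {a b : ℕ}
    {T : Matrix (Fin a × Fin s) (Fin b × Fin s) F}
    (h : genJordanBlock F s a p * T = T * genJordanBlock F s b p) :
    blockShift F s a p * T = T * blockShift F s b p := by
  simp only [blockShift, Matrix.add_mul, Matrix.mul_add, Matrix.sum_mul, Matrix.mul_sum,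
    Matrix.smul_mul, Matrix.mul_smul, pow_mul_eq_mul_pow_of_mul_eq h]

theorem commute_blockShift_genJordanBlock {ℓ : ℕ} :
    Commute (blockShift F s ℓ p) (genJordanBlock F s ℓ p) :=
  blockShift_mul_eq_mul_blockShift rfl

theorem mulVec_blockBasisVec_eq_of_mul_eq {a b : ℕ}
    {T : Matrix (Fin a × Fin s) (Fin b × Fin s) F}
    (h : genJordanBlock F s a p * T = T * genJordanBlock F s b p) {j : ℕ} (hj : j < s) (l : ℕ) :
    T *ᵥ blockBasisVec F b s l j =
      genJordanBlock F s a p ^ j *ᵥ blockShift F s a p ^ l *ᵥ T *ᵥ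
        blockBasisVec F b s 0 0 := by
  rw [blockBasisVec_eq_pow_mulVec (p := p) hj, mulVec_mulVec, mulVec_mulVec, mulVec_mulVec,
    mulVec_mulVec, ← pow_mul_eq_mul_pow_of_mul_eq h, Matrix.mul_assoc,
    ← pow_mul_eq_mul_pow_of_mul_eq (blockShift_mul_eq_mul_blockShift h), Matrix.mul_assoc]

theorem blockShift_pow_self {ℓ : ℕ} : blockShift F s ℓ p ^ ℓ = 0 := by
  refine ext_of_mulVec_single fun y => ?_
  have hG : genJordanBlock F s ℓ p * blockShift F s ℓ p ^ ℓ =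
      blockShift F s ℓ p ^ ℓ * genJordanBlock F s ℓ p :=
    (commute_blockShift_genJordanBlock.pow_left ℓ).eq.symm
  rw [Pi.single_one_eq_blockBasisVec, mulVec_blockBasisVec_eq_of_mul_eq hG y.2.isLt,
    blockShift_pow_mulVec_blockBasisVec, blockBasisVec_eq_zero (by omega), mulVec_zero,
    mulVec_zero, zero_mulVec]

end BlockShift

section Intertwiner

variable {F : Type*} [Field F] {s a b : ℕ} {p : Polynomial F}
  {T : Matrix (Fin a × Fin s) (Fin b × Fin s) F}

theorem intertwiner_apply_eq_zero (h : genJordanBlock F s a p * T = T * genJordanBlock F s b p)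
    (x : Fin a × Fin s) {y : Fin b × Fin s} (hy : a ≤ y.1) : T x y = 0 := by
  have hpow : blockShift F s a p ^ (y.1 : ℕ) = 0 := by
    rw [← Nat.add_sub_cancel' hy, pow_add, blockShift_pow_self, zero_mul]
  have hcol := mulVec_blockBasisVec_eq_of_mul_eq h y.2.isLt y.1
  rw [hpow, zero_mulVec, mulVec_zero, ← Pi.single_one_eq_blockBasisVec, mulVec_single_one] at hcol
  exact congrFun hcol x

end Intertwiner

theorem genJordanBlock_submatrix_castLE {F : Type*} [Field F] {s a b : ℕ} (hab : a ≤ b)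
    (p : Polynomial F) :
    (genJordanBlock F s b p).submatrix (Prod.map (Fin.castLE hab) id)
      (Prod.map (Fin.castLE hab) id) = genJordanBlock F s a p := by
  ext x y
  simp [genJordanBlock, Fin.ext_iff]

/-- if `G_1, G_2` are generalized Jordan blocks of sizes `a ≤ b`
associated with a monic irreducible `p` of degree `s` and `G_1 T = T G_2`, then
`T = [T_1, 0]` with `T_1 ∈ Z(G_1)`: the last `s(b-a)` columns of `T` vanish and the
left `sa × sa` submatrix commutes with `G_1`. -/
theorem intertwiner_genJordanBlocks_le
    {F : Type*} [Field F] {s a b : ℕ} (hab : a ≤ b)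
    (p : Polynomial F)
    (T : Matrix (Fin a × Fin s) (Fin b × Fin s) F)
    (hT : genJordanBlock F s a p * T = T * genJordanBlock F s b p) :
    (∀ (x : Fin a × Fin s) (y : Fin b × Fin s), a ≤ (y.1 : ℕ) → T x y = 0) ∧
    (Matrix.of fun x y : Fin a × Fin s =>
        T x (⟨(y.1 : ℕ), by have := y.1.isLt; omega⟩, y.2)) *
        genJordanBlock F s a p =
      genJordanBlock F s a p *
        (Matrix.of fun x y : Fin a × Fin s =>
          T x (⟨(y.1 : ℕ), by have := y.1.isLt; omega⟩, y.2)) := by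
  have hzero : ∀ x y, a ≤ (y.1 : ℕ) → T x y = 0 := fun x _ hy =>
    intertwiner_apply_eq_zero hT x hy
  refine ⟨hzero, submatrix_mul_comm_of_mul_eq hT
    ((Fin.castLE_injective hab).prodMap Function.injective_id)
    (genJordanBlock_submatrix_castLE hab p) fun x y hy => hzero x y ?_⟩
  by_contra! hlt
  exact hy ⟨(⟨y.1, hlt⟩, y.2), rfl⟩
end
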